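/- Let G be a connected AT-free graph, s,t nonadjacent vertices, and T_s a minimal s,t-separator with T_s ⊆ N_G(s)∖N_G[t]. Then for any two connected components C_1, C_2 of G−T_s other than C_s(G−T_s), either N_G(C_1) ⊆ N_G(C_2) or N_G(C_2) ⊆ N_G(C_1). -/

import Mathlib

variable {V : Type*}

/-- Reachability in `G` by a walk avoiding the vertex set `S`. -/
def ReachAvoid (G : SimpleGraph V) (S : Set V) (u v : V) : Prop :=
  ∃ w : G.Walk u v, ∀ x ∈ w.support, x ∉ S

/-- The connected component of `G − S` containing `s`, as a subset of `V`. -/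
def compOf (G : SimpleGraph V) (S : Set V) (s : V) : Set V :=
  {v | ReachAvoid G S s v}

/-- `S` is an `s,t`-separator of `G`. -/
def IsSep (G : SimpleGraph V) (s t : V) (S : Set V) : Prop :=
  s ∉ S ∧ t ∉ S ∧ ¬ ReachAvoid G S s t

/-- `S` is a minimal `s,t`-separator of `G`. -/
def IsMinSep (G : SimpleGraph V) (s t : V) (S : Set V) : Prop :=
  IsSep G s t S ∧ ∀ S' ⊂ S, ¬ IsSep G s t S'

/-- The open neighborhood of a vertex set `X`. -/
def nbhd (G : SimpleGraph V) (X : Set V) : Set V :=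
  {v | v ∉ X ∧ ∃ x ∈ X, G.Adj x v}

/-- The closed neighborhood of a vertex `v`. -/
def clNbhd (G : SimpleGraph V) (v : V) : Set V :=
  insert v (G.neighborSet v)

/-- `S` is a minimal `s,t`-separator close to `sA`. -/
def CloseTo (G : SimpleGraph V) (s t : V) (A : Set V) (S : Set V) : Prop :=
  IsMinSep G s t S ∧ A ⊆ compOf G S s ∧
    ∀ T, IsMinSep G s t T → T ≠ S → A ⊆ compOf G T s →
      ¬ compOf G T s ⊆ compOf G S s

/-- `G` contains no asteroidal triple. -/
def IsATFree (G : SimpleGraph V) : Prop :=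
  ¬ ∃ a b c : V, a ≠ b ∧ a ≠ c ∧ b ≠ c ∧
    ¬ G.Adj a b ∧ ¬ G.Adj a c ∧ ¬ G.Adj b c ∧
    (∃ w : G.Walk a b, ∀ x ∈ w.support, x ∉ clNbhd G c) ∧
    (∃ w : G.Walk a c, ∀ x ∈ w.support, x ∉ clNbhd G b) ∧
    (∃ w : G.Walk b c, ∀ x ∈ w.support, x ∉ clNbhd G a)

/-- `S` is an `A,B`-separator. -/
def IsABSep (G : SimpleGraph V) (A B : Set V) (S : Set V) : Prop :=
  S ⊆ (A ∪ B)ᶜ ∧ ∀ a ∈ A, ∀ b ∈ B, ¬ ReachAvoid G S a b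

/-- `S` is a minimal `A,B`-separator. -/
def IsMinABSep (G : SimpleGraph V) (A B S : Set V) : Prop :=
  IsABSep G A B S ∧ ∀ S' ⊂ S, ¬ IsABSep G A B S'

/-- `S` is a safe (connectivity-preserving) `A,B`-separator: removing `S`
leaves two distinct components, one containing `A` and one containing `B`. -/
def IsSafeSep (G : SimpleGraph V) (A B S : Set V) : Prop :=
  S ⊆ (A ∪ B)ᶜ ∧ ∃ a b : V, a ∉ S ∧ b ∉ S ∧
    A ⊆ compOf G S a ∧ B ⊆ compOf G S b ∧
    Disjoint (compOf G S a) (compOf G S b)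

/-- The induced subgraph on `X` is connected (any two vertices of `X` are joined
by a walk staying in `X`). -/
def ConnIn (G : SimpleGraph V) (X : Set V) : Prop :=
  ∀ x ∈ X, ∀ y ∈ X, ∃ w : G.Walk x y, ∀ z ∈ w.support, z ∈ X

/-- The graph obtained from `G` by contracting `{s} ∪ A` to the vertex `s`
(the vertices of `A` become isolated). -/
def contractGraph (G : SimpleGraph V) (s : V) (A : Set V) : SimpleGraph V where
  Adj u v := u ∉ A ∧ v ∉ A ∧ u ≠ v ∧
    (G.Adj u v ∨ (u = s ∧ ∃ a ∈ A, G.Adj a v) ∨ (v = s ∧ ∃ a ∈ A, G.Adj a u))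
  symm := by
    constructor
    rintro u v ⟨hu, hv, hne, h⟩
    refine ⟨hv, hu, hne.symm, ?_⟩
    rcases h with h | h | h
    · exact Or.inl h.symm
    · exact Or.inr (Or.inr h)
    · exact Or.inr (Or.inl h)
  loopless := by
    constructor
    rintro u ⟨_, _, hne, _⟩
    exact hne rfl

/-- The graph obtained from `G` by adding all edges from `s` to `N_G[A]`. -/
def addApex (G : SimpleGraph V) (s : V) (A : Set V) : SimpleGraph V where
  Adj u v := G.Adj u v ∨
    (u = s ∧ v ≠ s ∧ v ∈ A ∪ nbhd G A) ∨
    (v = s ∧ u ≠ s ∧ u ∈ A ∪ nbhd G A)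
  symm := by
    constructor
    rintro u v (h | h | h)
    · exact Or.inl h.symm
    · exact Or.inr (Or.inr h)
    · exact Or.inr (Or.inl h)
  loopless := by
    constructor
    rintro u (h | ⟨h1, h2, _⟩ | ⟨h1, h2, _⟩)
    · exact G.loopless.irrefl u h
    · exact h2 h1
    · exact h2 h1

/-- The graph obtained from `G` by subdividing every edge. -/
def subdiv (G : SimpleGraph V) : SimpleGraph (V ⊕ G.edgeSet) where
  Adj x y :=
    match x, y with
    | Sum.inl u, Sum.inr e => u ∈ (e : Sym2 V)
    | Sum.inr e, Sum.inl u => u ∈ (e : Sym2 V)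
    | _, _ => False
  symm := by
    constructor
    rintro (u | e) (v | f) h <;> exact h
  loopless := by
    constructor
    rintro (u | e) h <;> exact h

/-- The instance `2Dis(G,A,B)` of 2-Disjoint-Connected-Subgraphs has a solution. -/
def TwoDisSolvable (G : SimpleGraph V) (A B : Set V) : Prop :=
  ∃ A₁ B₁ : Set V, Disjoint A₁ B₁ ∧ A ⊆ A₁ ∧ B ⊆ B₁ ∧
    ConnIn G A₁ ∧ ConnIn G B₁

/-! If two components `C₁, C₂` of `G − T_s` avoiding `t` had incomparable neighbourhoods,
pick `x ∈ N(C₁) \ N(C₂)` with a neighbour `a ∈ C₁` and `y ∈ N(C₂) \ N(C₁)` with a neighbour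
`b ∈ C₂`. Then `a, b, t` is an asteroidal triple: `a x s y b` avoids `N[t]` because
`T_s ⊆ N(s) \ N[t]`, and since every vertex of a minimal separator has a neighbour in `C_t`,
the walk from `a` through `x` and then inside `C_t` to `t` avoids `N[b]` (symmetrically for
`b`). When `t ∈ C₁`, `N(C₂) ⊆ T_s ⊆ N(C₁)` instead. -/

section Components

variable {G : SimpleGraph V} {S T : Set V} {u v w z : V}

namespace ReachAvoid

theorem right_notMem (h : ReachAvoid G S u v) : v ∉ S :=
  let ⟨p, hp⟩ := h; hp v p.end_mem_support

theorem refl (h : u ∉ S) : ReachAvoid G S u u :=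
  ⟨.nil, by simpa using h⟩

theorem symm (h : ReachAvoid G S u v) : ReachAvoid G S v u :=
  let ⟨p, hp⟩ := h; ⟨p.reverse, fun x hx => hp x (by simpa using hx)⟩

theorem trans (h₁ : ReachAvoid G S u v) (h₂ : ReachAvoid G S v w) : ReachAvoid G S u w := by
  obtain ⟨p, hp⟩ := h₁
  obtain ⟨q, hq⟩ := h₂
  refine ⟨p.append q, fun x hx => ?_⟩
  rcases (SimpleGraph.Walk.mem_support_append_iff p q).mp hx with hx | hx
  exacts [hp x hx, hq x hx]

theorem trans_adj (h : ReachAvoid G S u v) (hvw : G.Adj v w) (hw : w ∉ S) :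
    ReachAvoid G S u w :=
  h.trans ⟨.cons hvw .nil, by simp [h.right_notMem, hw]⟩

theorem of_mem_support (p : G.Walk u v) (hp : ∀ x ∈ p.support, x ∉ S) (hz : z ∈ p.support) :
    ReachAvoid G S u z := by
  classical
  exact ⟨p.takeUntil z hz, fun x hx => hp x (p.support_takeUntil_subset_support hz hx)⟩

theorem of_notMem_compOf (h : ReachAvoid G S u v) (hT : ∀ x ∈ compOf G S u, x ∉ T) :
    ReachAvoid G T u v :=
  let ⟨p, hp⟩ := h; ⟨p, fun _ hx => hT _ (of_mem_support p hp hx)⟩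

end ReachAvoid

theorem mem_compOf_self (h : u ∉ S) : u ∈ compOf G S u :=
  ReachAvoid.refl h

theorem notMem_of_mem_compOf (h : v ∈ compOf G S u) : v ∉ S :=
  ReachAvoid.right_notMem h

theorem mem_compOf_comm : v ∈ compOf G S u ↔ u ∈ compOf G S v :=
  ⟨ReachAvoid.symm, ReachAvoid.symm⟩

theorem compOf_eq_of_mem (h : v ∈ compOf G S u) : compOf G S u = compOf G S v :=
  Set.ext fun _ => ⟨(ReachAvoid.symm h).trans, h.trans⟩

theorem mem_compOf_of_adj (hz : z ∈ compOf G S u) (hzw : G.Adj z w) (hw : w ∉ S) :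
    w ∈ compOf G S u :=
  ReachAvoid.trans_adj hz hzw hw

theorem nbhd_compOf_subset : nbhd G (compOf G S u) ⊆ S := fun _ ⟨hx, _, ha, hax⟩ =>
  by_contra fun hxS => hx (mem_compOf_of_adj ha hax hxS)

theorem mem_clNbhd_comm : u ∈ clNbhd G v ↔ v ∈ clNbhd G u := by
  simp only [clNbhd, Set.mem_insert_iff, SimpleGraph.mem_neighborSet, eq_comm (a := u),
    G.adj_comm]

theorem ne_and_not_adj_of_notMem_clNbhd (h : v ∉ clNbhd G u) : u ≠ v ∧ ¬ G.Adj u v := by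
  simpa [clNbhd, eq_comm] using h

theorem notMem_clNbhd_of_mem_compOf (hz : z ∈ compOf G S u) (hv : v ∉ S)
    (hvu : v ∉ compOf G S u) : z ∉ clNbhd G v := by
  rintro (rfl | hvz)
  exacts [hvu hz, hvu (mem_compOf_of_adj hz hvz.symm hv)]

theorem notMem_clNbhd_of_notMem_nbhd {X : Set V} (hv : v ∈ X) (hz : z ∉ X)
    (hzX : z ∉ nbhd G X) : z ∉ clNbhd G v := by
  rintro (rfl | hvz)
  exacts [hz hv, hzX ⟨hz, v, hv, hvz⟩]

theorem mem_nbhd_compOf_of_walk {x : V} (p : G.Walk u x) (hu : u ∉ S) (hx : x ∈ S)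
    (hp : ∀ z ∈ p.support, z ∈ S → z = x) : x ∈ nbhd G (compOf G S u) := by
  induction p with
  | nil => exact absurd hx hu
  | @cons u v x huv p ih =>
    by_cases hv : v ∈ S
    · obtain rfl : v = x := hp v (by simp) hv
      exact ⟨fun h => notMem_of_mem_compOf h hx, u, mem_compOf_self hu, huv⟩
    · rw [compOf_eq_of_mem (mem_compOf_of_adj (mem_compOf_self hu) huv hv)]
      exact ih hv hx fun z hz => hp z (by simp [hz])

end Components

theorem IsMinSep.subset_nbhd_compOf_right {G : SimpleGraph V} {s t : V} {S : Set V}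
    (hS : IsMinSep G s t S) : S ⊆ nbhd G (compOf G S t) := by
  classical
  intro x hx
  obtain ⟨⟨hs, ht, hsep⟩, hmin⟩ := hS
  obtain ⟨p, hp⟩ : ReachAvoid G (S \ {x}) s t := by
    by_contra h
    exact hmin _ (Set.sdiff_singleton_ssubset.mpr hx) ⟨fun h => hs h.1, fun h => ht h.1, h⟩
  have hxp : x ∈ p.reverse.support := by
    by_contra hxp
    exact hsep ⟨p, fun z hz hzS => hp z hz ⟨hzS, fun h => hxp (by subst h; simpa using hz)⟩⟩
  refine mem_nbhd_compOf_of_walk (p.reverse.takeUntil x hxp) ht hx fun z hz hzS => ?_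
  have hz' : z ∈ p.support := by
    simpa using p.reverse.support_takeUntil_subset_support hxp hz
  by_contra hzx
  exact hp z hz' ⟨hzS, hzx⟩

section ATFree

variable {G : SimpleGraph V} {S : Set V} {s t : V}

theorem reachAvoid_clNbhd_of_mem_nbhd_compOf (hS : S ⊆ nbhd G (compOf G S t))
    {a b x : V} (hax : G.Adj a x) (hxS : x ∈ S) (hxb : x ∉ nbhd G (compOf G S b))
    (hb : b ∉ S) (htb : t ∉ compOf G S b) (ha : a ∉ clNbhd G b) :
    ReachAvoid G (clNbhd G b) a t := by
  have hbt : b ∉ compOf G S t := mem_compOf_comm.not.mpr htb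
  have hCt : ∀ z ∈ compOf G S t, z ∉ clNbhd G b := fun _ hz =>
    notMem_clNbhd_of_mem_compOf hz hb hbt
  obtain ⟨-, c, hc, hcx⟩ := hS hxS
  have hx : x ∉ clNbhd G b := notMem_clNbhd_of_notMem_nbhd (mem_compOf_self hb)
    (fun h => notMem_of_mem_compOf h hxS) hxb
  exact (((ReachAvoid.of_notMem_compOf hc hCt).trans_adj hcx hx).trans_adj hax.symm ha).symm

theorem IsATFree.nbhd_compOf_subset_or (hat : IsATFree G) (hS : S ⊆ nbhd G (compOf G S t))
    (hSs : S ⊆ G.neighborSet s \ clNbhd G t) (hs : s ∉ clNbhd G t) {c₁ c₂ : V}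
    (ht₁ : t ∉ compOf G S c₁) (ht₂ : t ∉ compOf G S c₂) :
    nbhd G (compOf G S c₁) ⊆ nbhd G (compOf G S c₂) ∨
      nbhd G (compOf G S c₂) ⊆ nbhd G (compOf G S c₁) := by
  by_contra hcon
  obtain ⟨hn₁, hn₂⟩ := not_or.mp hcon
  obtain ⟨x, hx₁, hx₂⟩ := Set.not_subset.mp hn₁
  obtain ⟨y, hy₂, hy₁⟩ := Set.not_subset.mp hn₂
  have hxS := nbhd_compOf_subset hx₁
  have hyS := nbhd_compOf_subset hy₂
  obtain ⟨-, a, ha₁, hax⟩ := hx₁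
  obtain ⟨-, b, hb₂, hby⟩ := hy₂
  have ha : a ∉ S := notMem_of_mem_compOf ha₁
  have hb : b ∉ S := notMem_of_mem_compOf hb₂
  have ht : t ∉ S := fun h => (hSs h).2 (Set.mem_insert t _)
  have hba : b ∉ compOf G S c₁ := fun h => hx₂ <| compOf_eq_of_mem hb₂ ▸ compOf_eq_of_mem h ▸
    ⟨fun h' => notMem_of_mem_compOf h' hxS, a, ha₁, hax⟩
  rw [compOf_eq_of_mem ha₁] at ht₁ hy₁ hba
  rw [compOf_eq_of_mem hb₂] at ht₂ hx₂
  have hb_a : b ∉ clNbhd G a :=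
    notMem_clNbhd_of_mem_compOf (mem_compOf_self hb) ha (mem_compOf_comm.not.mpr hba)
  have ht_a : t ∉ clNbhd G a :=
    notMem_clNbhd_of_mem_compOf (mem_compOf_self ht) ha (mem_compOf_comm.not.mpr ht₁)
  have ht_b : t ∉ clNbhd G b :=
    notMem_clNbhd_of_mem_compOf (mem_compOf_self ht) hb (mem_compOf_comm.not.mpr ht₂)
  have hab := ne_and_not_adj_of_notMem_clNbhd hb_a
  have hta := ne_and_not_adj_of_notMem_clNbhd ht_a
  have htb := ne_and_not_adj_of_notMem_clNbhd ht_b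
  -- the three walk conditions of `IsATFree` unfold to `ReachAvoid G (clNbhd G _)`
  refine hat ⟨a, b, t, hab.1, hta.1, htb.1, hab.2, hta.2, htb.2, ?_, ?_, ?_⟩
  · obtain ⟨hsx, hxt⟩ := hSs hxS
    obtain ⟨hsy, hyt⟩ := hSs hyS
    exact ((((ReachAvoid.refl (mem_clNbhd_comm.not.mpr ht_a)).trans_adj hax hxt).trans_adj
      hsx.symm hs).trans_adj hsy hyt).trans_adj hby.symm (mem_clNbhd_comm.not.mpr ht_b)
  · exact reachAvoid_clNbhd_of_mem_nbhd_compOf hS hax hxS hx₂ hb ht₂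
      (mem_clNbhd_comm.not.mpr hb_a)
  · exact reachAvoid_clNbhd_of_mem_nbhd_compOf hS hby hyS hy₁ ha ht₁ hb_a

end ATFree

theorem stmt10_general (G : SimpleGraph V) (hat : IsATFree G)
    (s t : V) (hst : s ≠ t) (hadj : ¬ G.Adj s t)
    (Ts : Set V) (hTs : IsMinSep G s t Ts)
    (hTsN : Ts ⊆ G.neighborSet s \ clNbhd G t)
    (c₁ c₂ : V) :
    nbhd G (compOf G Ts c₁) ⊆ nbhd G (compOf G Ts c₂) ∨
    nbhd G (compOf G Ts c₂) ⊆ nbhd G (compOf G Ts c₁) := by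
  have hTt := hTs.subset_nbhd_compOf_right
  by_cases ht₁ : t ∈ compOf G Ts c₁
  · exact .inr (compOf_eq_of_mem ht₁ ▸ nbhd_compOf_subset.trans hTt)
  by_cases ht₂ : t ∈ compOf G Ts c₂
  · exact .inl (compOf_eq_of_mem ht₂ ▸ nbhd_compOf_subset.trans hTt)
  have hs : s ∉ clNbhd G t := by
    rintro (h | h)
    exacts [hst h, hadj h.symm]
  exact hat.nbhd_compOf_subset_or hTt hTsN hs ht₁ ht₂

theorem stmt10 (G : SimpleGraph V) (hconn : G.Connected) (hat : IsATFree G)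
    (s t : V) (hst : s ≠ t) (hadj : ¬ G.Adj s t)
    (Ts : Set V) (hTs : IsMinSep G s t Ts)
    (hTsN : Ts ⊆ G.neighborSet s \ clNbhd G t)
    (c₁ c₂ : V) (hc₁ : c₁ ∉ Ts) (hc₂ : c₂ ∉ Ts)
    (h₁ : s ∉ compOf G Ts c₁) (h₂ : s ∉ compOf G Ts c₂) :
    nbhd G (compOf G Ts c₁) ⊆ nbhd G (compOf G Ts c₂) ∨
    nbhd G (compOf G Ts c₂) ⊆ nbhd G (compOf G Ts c₁) :=
  stmt10_general G hat s t hst hadj Ts hTs hTsN c₁ c₂
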